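/- arXiv:1402.5607 — 2 statements merged into one kernel-verified Lean document; each statement's English description precedes it below -/
import Mathlib

section
/- For d finite sequences of random variables X_k^{(i)}, 1 ≤ k ≤ n, 1 ≤ i ≤ d, and constants u^{(1)},...,u^{(d)}, the probability of the union over i of {max_{1≤k≤n} X_k^{(i)} > u^{(i)}} equals Σ_{k=1}^n P(X_k^{(1)} > u^{(1)}, and M_{k,n}^{(t)} ≤ u^{(t)} for all 1 ≤ t ≤ d) plus Σ_{i=2}^d Σ_{k=1}^n P(X_k^{(i)} > u^{(i)}, M_{k-1,n}^{(s)} ≤ u^{(s)} for all 1 ≤ s ≤ i-1, and M_{k,n}^{(t)} ≤ u^{(t)} for all i ≤ t ≤ d). -/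
open MeasureTheory Finset

/-! Call `(i, k)` an exceedance of `ω` if `u i < X i k ω`, and order exceedances by the time `k`,
ties broken by decreasing coordinate `i`. Every `ω` in the union has a greatest exceedance, at the
last time `k` some coordinate exceeds its level, in the smallest coordinate `i` exceeding then; the
`(i, k)`-th event on the right says precisely that `(i, k)` is this greatest exceedance. These
events therefore partition the union. -/

section LastOccurrence

variable {Ω α ι : Type*} [LinearOrder ι] (s : Finset α) (f : α → ι) (E : α → Set Ω)

theorem Set.biUnion_finset_eq_biUnion_diff_later :
    ⋃ p ∈ s, E p = ⋃ p ∈ s, E p \ ⋃ q ∈ s, ⋃ (_ : f p < f q), E q := by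
  refine subset_antisymm ?_ (Set.biUnion_mono subset_rfl fun _ _ => Set.sdiff_subset)
  classical
  intro ω hω
  have hne : (s.filter (ω ∈ E ·)).Nonempty := by
    simpa only [Set.mem_iUnion₂, Finset.Nonempty, Finset.mem_filter, exists_prop] using hω
  obtain ⟨p, hp, hp_last⟩ := (s.filter (ω ∈ E ·)).exists_max_image f hne
  obtain ⟨hps, hωp⟩ := Finset.mem_filter.mp hp
  refine Set.mem_biUnion hps ⟨hωp, ?_⟩
  simp only [Set.mem_iUnion, not_exists]
  exact fun q hq hlt hωq => (hp_last q (Finset.mem_filter.mpr ⟨hq, hωq⟩)).not_gt hlt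

theorem Set.pairwiseDisjoint_diff_later (hf : Set.InjOn f s) :
    (s : Set α).PairwiseDisjoint (fun p => E p \ ⋃ q ∈ s, ⋃ (_ : f p < f q), E q) := by
  intro p hp q hq hpq
  wlog hlt : f p < f q generalizing p q
  · exact (this hq hp hpq.symm <| (Ne.lt_or_gt fun h => hpq (hf hp hq h)).resolve_left hlt).symm
  exact Set.disjoint_left.mpr fun ω hωp hωq =>
    hωp.2 (Set.mem_biUnion hq (Set.mem_iUnion.mpr ⟨hlt, hωq.1⟩))

theorem MeasureTheory.measure_biUnion_finset_eq_sum_diff_later [MeasurableSpace Ω]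
    (μ : Measure Ω) (hf : Set.InjOn f s) (hE : ∀ p ∈ s, MeasurableSet (E p)) :
    μ (⋃ p ∈ s, E p) = ∑ p ∈ s, μ (E p \ ⋃ q ∈ s, ⋃ (_ : f p < f q), E q) := by
  rw [Set.biUnion_finset_eq_biUnion_diff_later s f,
    measure_biUnion_finset (Set.pairwiseDisjoint_diff_later s f E hf)]
  exact fun p hp => (hE p hp).diff <|
    .biUnion s.countable_toSet fun q hq => .iUnion fun _ => hE q hq

end LastOccurrence

def exceedanceOrder (p : ℕ × ℕ) : ℕ ×ₗ ℕᵒᵈ := toLex (p.2, OrderDual.toDual p.1)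

theorem exceedanceOrder_injective : Function.Injective exceedanceOrder := fun p q h => by
  simpa [exceedanceOrder, Prod.ext_iff, and_comm] using h

theorem forall_exceedanceOrder_lt_imp_iff {P : ℕ → ℕ → Prop} {d n i k : ℕ} (hi : i ∈ Icc 1 d)
    (hk : 1 ≤ k) :
    (∀ q ∈ Icc 1 d ×ˢ Icc 1 n, exceedanceOrder (i, k) < exceedanceOrder q → P q.1 q.2) ↔
    (∀ s ∈ Icc 1 (i - 1), ∀ j ∈ Icc k n, P s j) ∧ ∀ t ∈ Icc i d, ∀ j ∈ Ioc k n, P t j := by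
  simp only [exceedanceOrder, Prod.forall, mem_product, Prod.Lex.toLex_lt_toLex,
    OrderDual.toDual_lt_toDual, mem_Icc, mem_Ioc] at hi ⊢
  constructor
  · intro h
    exact ⟨fun s hs j hj => h s j (by omega) (by omega),
      fun t ht j hj => h t j (by omega) (by omega)⟩
  · rintro ⟨hearlier, hlater⟩ t j htj hlt
    rcases lt_or_ge t i with hti | hit
    · exact hearlier t (by omega) j (by omega)
    · exact hlater t (by omega) j (by omega)

theorem multivariate_max_union_decomposition_general {Ω : Type*} [MeasureSpace Ω]
    (d n : ℕ) (hd : 1 ≤ d)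
    (X : ℕ → ℕ → Ω → ℝ) (hX : ∀ i k, Measurable (X i k)) (u : ℕ → ℝ) :
    volume {ω : Ω | ∃ i ∈ Finset.Icc 1 d, ∃ k ∈ Finset.Icc 1 n, u i < X i k ω} =
      (∑ k ∈ Finset.Icc 1 n,
        volume {ω : Ω | u 1 < X 1 k ω ∧ ∀ t ∈ Finset.Icc 1 d, ∀ j ∈ Finset.Ioc k n, X t j ω ≤ u t})
      + ∑ i ∈ Finset.Icc 2 d, ∑ k ∈ Finset.Icc 1 n,
        volume {ω : Ω | u i < X i k ω
          ∧ (∀ s ∈ Finset.Icc 1 (i - 1), ∀ j ∈ Finset.Icc k n, X s j ω ≤ u s)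
          ∧ ∀ t ∈ Finset.Icc i d, ∀ j ∈ Finset.Ioc k n, X t j ω ≤ u t} := by
  set grid := Icc 1 d ×ˢ Icc 1 n
  set E : ℕ × ℕ → Set Ω := fun p => {ω | u p.1 < X p.1 p.2 ω}
  have hunion : {ω : Ω | ∃ i ∈ Icc 1 d, ∃ k ∈ Icc 1 n, u i < X i k ω} = ⋃ p ∈ grid, E p := by
    ext ω
    simp [grid, E, and_assoc]
  have hlast : ∀ p ∈ grid, E p \ ⋃ q ∈ grid, ⋃ (_ : exceedanceOrder p < exceedanceOrder q), E q =
      {ω | u p.1 < X p.1 p.2 ω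
          ∧ (∀ s ∈ Icc 1 (p.1 - 1), ∀ j ∈ Icc p.2 n, X s j ω ≤ u s)
          ∧ ∀ t ∈ Icc p.1 d, ∀ j ∈ Ioc p.2 n, X t j ω ≤ u t} := by
    rintro ⟨i, k⟩ hp
    rw [mem_product] at hp
    ext ω
    simp only [Set.mem_sdiff, Set.mem_iUnion, not_exists, E, Set.mem_ofPred_eq, not_lt]
    exact and_congr_right fun _ => forall_exceedanceOrder_lt_imp_iff
      (P := fun t j => X t j ω ≤ u t) hp.1 (mem_Icc.mp hp.2).1
  rw [hunion, measure_biUnion_finset_eq_sum_diff_later grid exceedanceOrder E _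
      exceedanceOrder_injective.injOn fun p _ => measurableSet_lt measurable_const (hX _ _),
    sum_congr rfl fun p hp => congrArg volume (hlast p hp), sum_product,
    ← add_sum_Ioc_eq_sum_Icc hd, ← Icc_add_one_left_eq_Ioc]
  simp only [tsub_self, Icc_eq_empty_of_lt zero_lt_one, notMem_empty, IsEmpty.forall_iff,
    implies_true, true_and]
  rfl

theorem multivariate_max_union_decomposition {Ω : Type*} [MeasureSpace Ω]
    (hP : IsProbabilityMeasure (volume : Measure Ω))
    (d n : ℕ) (hd : 1 ≤ d) (hn : 1 ≤ n)
    (X : ℕ → ℕ → Ω → ℝ) (hX : ∀ i k, Measurable (X i k)) (u : ℕ → ℝ) :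
    volume {ω : Ω | ∃ i ∈ Finset.Icc 1 d, ∃ k ∈ Finset.Icc 1 n, u i < X i k ω} =
      (∑ k ∈ Finset.Icc 1 n,
        volume {ω : Ω | u 1 < X 1 k ω ∧ ∀ t ∈ Finset.Icc 1 d, ∀ j ∈ Finset.Ioc k n, X t j ω ≤ u t})
      + ∑ i ∈ Finset.Icc 2 d, ∑ k ∈ Finset.Icc 1 n,
        volume {ω : Ω | u i < X i k ω
          ∧ (∀ s ∈ Finset.Icc 1 (i - 1), ∀ j ∈ Finset.Icc k n, X s j ω ≤ u s)
          ∧ ∀ t ∈ Finset.Icc i d, ∀ j ∈ Finset.Ioc k n, X t j ω ≤ u t} :=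
  multivariate_max_union_decomposition_general d n hd X hX u
end

section
/- Suppose ρ : ℕ → [−1, 1] with ρ(n) → 1 and (1 − ρ(n)) ln n → λ ∈ (0, ∞) as n → ∞. Let u_n(x) = x/√(2 ln n) + √(2 ln n) − (ln ln n + ln(4π))/(2√(2 ln n)). Then for fixed x, y ∈ ℝ, (u_n(y) − ρ(n) u_n(x)) / √(1 − ρ(n)²) → √λ + (y − x)/(2√λ) as n → ∞. -/
/-- The Gaussian normalizing levels `u_n(x) = x/a_n + b_n`. -/
noncomputable def un (n : ℕ) (x : ℝ) : ℝ :=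
  x / Real.sqrt (2 * Real.log n) + Real.sqrt (2 * Real.log n)
    - (Real.log (Real.log n) + Real.log (4 * Real.pi)) / (2 * Real.sqrt (2 * Real.log n))

/-!
With `s = √(2 log n)` and `r = ρ n` one has `u_n(x) = x / s + u_n(0)`, so the numerator is
`(y - r x) / s + (1 - r) u_n(0)`. Putting `A = √((1 - r) log n) → √λ` and `B = √(1 + r) → √2`,
`s √(1 - r²) = √2 A B` and `(1 - r) s / √(1 - r²) = √2 A / B`,
while `u_n(0) / s → 1` because its correction is `O(log log n / log n)`.
-/

open Filter Topology Real

theorem Filter.Tendsto.tendsto_zero_of_tendsto_mul_atTop {α : Type*} {l : Filter α}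
    {f g : α → ℝ} {c : ℝ} (hfg : Tendsto (fun a => f a * g a) l (𝓝 c))
    (hg : Tendsto g l atTop) : Tendsto f l (𝓝 0) := by
  refine (hfg.div_atTop hg).congr' ?_
  filter_upwards [hg.eventually_gt_atTop 0] with a ha
  field_simp

theorem tendsto_log_natCast_atTop : Tendsto (fun n : ℕ => log n) atTop atTop :=
  tendsto_log_atTop.comp tendsto_natCast_atTop_atTop

theorem un_eq_div_add_un_zero (n : ℕ) (x : ℝ) :
    un n x = x / √(2 * log n) + un n 0 := by
  simp only [un]
  ring

theorem tendsto_un_zero_div_sqrt :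
    Tendsto (fun n : ℕ => un n 0 / √(2 * log n)) atTop (𝓝 1) := by
  have hloglog : Tendsto (fun n : ℕ => log (log n) / log n) atTop (𝓝 0) :=
    isLittleO_log_id_atTop.tendsto_div_nhds_zero.comp tendsto_log_natCast_atTop
  have hconst : Tendsto (fun n : ℕ => log (4 * π) / log n) atTop (𝓝 0) :=
    tendsto_const_nhds.div_atTop tendsto_log_natCast_atTop
  have hlim := ((hloglog.add hconst).div_const 4).const_sub 1
  rw [zero_add, zero_div, sub_zero] at hlim
  refine hlim.congr' ?_
  filter_upwards [tendsto_log_natCast_atTop.eventually_gt_atTop 0] with n hn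
  have hs : √(2 * log n) ^ 2 = 2 * log n := sq_sqrt (by positivity)
  have hs0 : √(2 * log n) ≠ 0 := (sqrt_pos.mpr (by positivity)).ne'
  simp only [un]
  generalize √(2 * log n) = s at hs hs0
  field_simp
  linear_combination (-2 * (log (log n) + log (4 * π))) * hs

theorem husler_reiss_decomposition {r L : ℝ} (hr₁ : 0 < 1 - r) (hr₂ : 0 < 1 + r) (hL : 0 < L)
    (p q : ℝ) :
    (p / √(2 * L) + (1 - r) * q) / √(1 - r ^ 2) =
      p / (√2 * √((1 - r) * L) * √(1 + r)) + √2 * √((1 - r) * L) / √(1 + r) * (q / √(2 * L)) := by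
  have hsq : √(1 - r ^ 2) = √(1 - r) * √(1 + r) := by
    rw [← sqrt_mul hr₁.le]
    ring_nf
  have h1r : √(1 - r) ^ 2 = 1 - r := sq_sqrt hr₁.le
  have h1 : √(1 - r) ≠ 0 := (sqrt_pos.mpr hr₁).ne'
  have h2 : √(1 + r) ≠ 0 := (sqrt_pos.mpr hr₂).ne'
  have hL0 : √L ≠ 0 := (sqrt_pos.mpr hL).ne'
  rw [hsq, sqrt_mul hr₁.le, sqrt_mul zero_le_two]
  field_simp
  linear_combination (-(√2 * √L * q)) * h1r

theorem husler_reiss_threshold_limit_general (ρ : ℕ → ℝ)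
    (lam : ℝ) (hlam : 0 < lam)
    (hHR : Filter.Tendsto (fun n : ℕ => (1 - ρ n) * Real.log n) Filter.atTop (nhds lam))
    (x y : ℝ) :
    Filter.Tendsto
      (fun n : ℕ => (un n y - ρ n * un n x) / Real.sqrt (1 - (ρ n) ^ 2))
      Filter.atTop (nhds (Real.sqrt lam + (y - x) / (2 * Real.sqrt lam))) := by
  have hρ : Tendsto ρ atTop (𝓝 1) := by
    simpa using (hHR.tendsto_zero_of_tendsto_mul_atTop tendsto_log_natCast_atTop).const_sub 1
  have hA : Tendsto (fun n => √((1 - ρ n) * log n)) atTop (𝓝 √lam) := hHR.sqrt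
  have hB : Tendsto (fun n => √(1 + ρ n)) atTop (𝓝 √2) := by
    simpa [one_add_one_eq_two] using (hρ.const_add 1).sqrt
  have hsl : 0 < √lam := sqrt_pos.mpr hlam
  have hlim : Tendsto (fun n => (y - ρ n * x) / (√2 * √((1 - ρ n) * log n) * √(1 + ρ n)) +
      √2 * √((1 - ρ n) * log n) / √(1 + ρ n) * (un n 0 / √(2 * log n))) atTop
      (𝓝 ((y - 1 * x) / (√2 * √lam * √2) + √2 * √lam / √2 * 1)) :=
    ((tendsto_const_nhds.sub (hρ.mul_const x)).div
      ((tendsto_const_nhds.mul hA).mul hB) (by positivity)).add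
      (((tendsto_const_nhds.mul hA).div hB (by positivity)).mul tendsto_un_zero_div_sqrt)
  have hvalue : (y - 1 * x) / (√2 * √lam * √2) + √2 * √lam / √2 * 1 =
      √lam + (y - x) / (2 * √lam) := by
    have h2 : √2 * √2 = 2 := mul_self_sqrt zero_le_two
    field_simp
    linear_combination (x - y) * h2
  rw [← hvalue]
  refine hlim.congr' ?_
  filter_upwards [tendsto_log_natCast_atTop.eventually_gt_atTop 0, hHR.eventually_const_lt hlam,
    hρ.eventually_const_lt (by norm_num : (-1 : ℝ) < 1)] with n hL hpos hρn
  rw [un_eq_div_add_un_zero n y, un_eq_div_add_un_zero n x,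
    ← husler_reiss_decomposition (pos_of_mul_pos_left hpos hL.le) (by linarith) hL]
  ring

theorem husler_reiss_threshold_limit (ρ : ℕ → ℝ) (hρ : ∀ n, ρ n ∈ Set.Icc (-1 : ℝ) 1)
    (hρ1 : Filter.Tendsto ρ Filter.atTop (nhds 1))
    (lam : ℝ) (hlam : 0 < lam)
    (hHR : Filter.Tendsto (fun n : ℕ => (1 - ρ n) * Real.log n) Filter.atTop (nhds lam))
    (x y : ℝ) :
    Filter.Tendsto
      (fun n : ℕ => (un n y - ρ n * un n x) / Real.sqrt (1 - (ρ n) ^ 2))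
      Filter.atTop (nhds (Real.sqrt lam + (y - x) / (2 * Real.sqrt lam))) :=
  husler_reiss_threshold_limit_general ρ lam hlam hHR x y
end
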